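/- Let r, s ∈ (0,1], let R and S be unbiased qubit observables with Bloch vectors of norms r and s respectively, and let G^1 = (G^1_{σ,τ})_{σ,τ∈{+1,−1}} be the rank-1 informationally complete unbiased qubit POVM G^1_{σ,τ} = ¼(I + a⃗_{σ,τ}·σ⃗) with a⃗_{+1,+1} = (1/√3)(1,1,1), a⃗_{+1,−1} = (1/√3)(1,−1,−1), a⃗_{−1,+1} = (1/√3)(−1,−1,1), and a⃗_{−1,−1} = (1/√3)(−1,1,−1). Then G^1 can be generated through broadcasting from R and S if and only if r = 1 and s = 1, i.e., if and only if R and S are sharp. -/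

import Mathlib

open Kronecker Matrix
open scoped ComplexOrder

noncomputable section

/-- A linear map between matrix algebras is completely positive if it maps positive
semidefinite block matrices (with any finite number of blocks) to positive semidefinite
block matrices, blockwise. -/
def IsCPMap {m n : Type} [Fintype m] [DecidableEq m] [Fintype n] [DecidableEq n]
    (Φ : Matrix m m ℂ →ₗ[ℂ] Matrix n n ℂ) : Prop :=
  ∀ (k : ℕ) (A : Matrix (Fin k × m) (Fin k × m) ℂ), A.PosSemidef →
    (Matrix.of fun (p q : Fin k × n) =>
      Φ (Matrix.of fun a b => A (p.1, a) (q.1, b)) p.2 q.2).PosSemidef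

/-- A quantum channel: a trace-preserving completely positive linear map. -/
def IsChannel {m n : Type} [Fintype m] [DecidableEq m] [Fintype n] [DecidableEq n]
    (Φ : Matrix m m ℂ →ₗ[ℂ] Matrix n n ℂ) : Prop :=
  IsCPMap Φ ∧ ∀ ρ : Matrix m m ℂ, (Φ ρ).trace = ρ.trace

/-- A POVM with finite outcome set `X`: positive semidefinite effects summing to the identity. -/
def IsPOVM {X : Type} [Fintype X] {m : Type} [Fintype m] [DecidableEq m]
    (M : X → Matrix m m ℂ) : Prop :=
  (∀ x, (M x).PosSemidef) ∧ ∑ x, M x = 1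

/-- A PVM: a POVM all of whose effects are orthogonal projections. -/
def IsPVM {X : Type} [Fintype X] {m : Type} [Fintype m] [DecidableEq m]
    (M : X → Matrix m m ℂ) : Prop :=
  IsPOVM M ∧ ∀ x, (M x)ᴴ = M x ∧ M x * M x = M x

/-- `G` is generated through broadcasting from `M` and `N` if there is a channel `Φ`
such that `tr[Φ(ρ)(M x ⊗ N y)] = tr[ρ G x y]` for all `ρ, x, y`. -/
def GenByBroadcast {X Y : Type} [Fintype X] [Fintype Y]
    {d m n : Type} [Fintype d] [DecidableEq d] [Fintype m] [DecidableEq m]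
    [Fintype n] [DecidableEq n]
    (M : X → Matrix m m ℂ) (N : Y → Matrix n n ℂ)
    (G : X → Y → Matrix d d ℂ) : Prop :=
  ∃ Φ : Matrix d d ℂ →ₗ[ℂ] Matrix (m × n) (m × n) ℂ, IsChannel Φ ∧
    ∀ (ρ : Matrix d d ℂ) (x : X) (y : Y),
      (Φ ρ * (M x ⊗ₖ N y)).trace = (ρ * G x y).trace

/-- The Pauli matrix `σ_x`. -/
def pauliX : Matrix (Fin 2) (Fin 2) ℂ := !![0, 1; 1, 0]

/-- The Pauli matrix `σ_y`. -/
def pauliY : Matrix (Fin 2) (Fin 2) ℂ := !![0, -Complex.I; Complex.I, 0]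

/-- The Pauli matrix `σ_z`. -/
def pauliZ : Matrix (Fin 2) (Fin 2) ℂ := !![1, 0; 0, -1]

/-- `a⃗ · σ⃗` for a Bloch vector `a⃗ ∈ ℝ³`. -/
def blochOp (a : EuclideanSpace ℝ (Fin 3)) : Matrix (Fin 2) (Fin 2) ℂ :=
  a 0 • pauliX + a 1 • pauliY + a 2 • pauliZ

/-- The unbiased qubit observable with Bloch vector `a⃗`: the binary POVM
`σ ↦ ½(I + σ a⃗·σ⃗)`, indexed by the signs `σ ∈ ℤˣ = {+1, −1}`. -/
def unbiasedObs (a : EuclideanSpace ℝ (Fin 3)) (σ : ℤˣ) : Matrix (Fin 2) (Fin 2) ℂ :=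
  (1 / 2 : ℝ) • ((1 : Matrix (Fin 2) (Fin 2) ℂ) + ((σ : ℤ) : ℝ) • blochOp a)

/-- The Bloch vectors of the (scaled) tetrahedral informationally complete qubit POVM:
`a⃗_{σ,τ} = (g/√3)(σ, στ, τ)`, i.e. `a⃗_{+,+} = (g/√3)(1,1,1)`, `a⃗_{+,−} = (g/√3)(1,−1,−1)`,
`a⃗_{−,+} = (g/√3)(−1,−1,1)` and `a⃗_{−,−} = (g/√3)(−1,1,−1)`. -/
def tetraVec (g : ℝ) (σ τ : ℤˣ) : EuclideanSpace ℝ (Fin 3) :=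
  (g / Real.sqrt 3) •
    (WithLp.equiv 2 (Fin 3 → ℝ)).symm
      ![((σ : ℤ) : ℝ), ((σ : ℤ) : ℝ) * ((τ : ℤ) : ℝ), ((τ : ℤ) : ℝ)]

/-!
If `R` and `S` are sharp, their effects are rank-one projections with `tr[R_σ R_σ'] = δ_{σσ'}`,
so the measure-and-prepare channel `ρ ↦ ∑ tr[ρ G_{σ,τ}] R_σ ⊗ S_τ` broadcasts `G¹`.

Conversely, with `r = ‖a⃗‖` the projection `P = ½(I + r⁻¹ a⃗·σ⃗)` equals
`∑_σ ½(1 + σ/r) R_σ`, and similarly `Q` for `S`. Pairing `Φ(ρ) ≥ 0` with `P ⊗ Q ≥ 0` shows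
that the same combination of the effects of `G¹`, which is `¼(I + v⃗·σ⃗)` with
`v⃗ = (1/r, 1/(rs), 1/s)/√3`, is positive semidefinite. Hence `‖v⃗‖ ≤ 1`, that is
`r⁻² + (rs)⁻² + s⁻² ≤ 3`, and since `r, s ≤ 1` this forces `r = s = 1`.
-/

section PosSemidef

variable {𝕜 m : Type*} [RCLike 𝕜] [Fintype m]

theorem Matrix.trace_mul_vecMulVec_star (A : Matrix m m 𝕜) (x : m → 𝕜) :
    (vecMulVec x (star x) * A).trace = star x ⬝ᵥ A *ᵥ x := by
  rw [vecMulVec_mul, trace_vecMulVec, dotProduct_comm, dotProduct_mulVec]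

theorem Matrix.PosSemidef.trace_mul_nonneg {A B : Matrix m m 𝕜} (hA : A.PosSemidef)
    (hB : B.PosSemidef) : 0 ≤ (A * B).trace := by
  obtain ⟨k, v, rfl⟩ := posSemidef_iff_eq_sum_vecMulVec.mp hA
  rw [Matrix.sum_mul, trace_sum]
  exact Finset.sum_nonneg fun i _ => (trace_mul_vecMulVec_star B (v i)).symm ▸
    hB.dotProduct_mulVec_nonneg (v i)

theorem Matrix.posSemidef_of_trace_mul_nonneg {H : Matrix m m 𝕜} (hH : H.IsHermitian)
    (h : ∀ ρ : Matrix m m 𝕜, ρ.PosSemidef → 0 ≤ (ρ * H).trace) : H.PosSemidef :=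
  .of_dotProduct_mulVec_nonneg hH fun x => trace_mul_vecMulVec_star H x ▸
    h _ (posSemidef_vecMulVec_self_star x)

end PosSemidef

section CompletelyPositive

section

variable {m n : Type} [Fintype m]

def krausMap (V : Matrix n m ℂ) : Matrix m m ℂ →ₗ[ℂ] Matrix n n ℂ :=
  (mulRightLinearMap n ℂ Vᴴ).comp (mulLeftLinearMap m ℂ V)

theorem krausMap_apply (V : Matrix n m ℂ) (ρ : Matrix m m ℂ) : krausMap V ρ = V * ρ * Vᴴ := rfl

theorem krausMap_vecMulVec (v : m → ℂ) (w : n → ℂ) (ρ : Matrix m m ℂ) :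
    krausMap (vecMulVec w (star v)) ρ = (star v ⬝ᵥ ρ *ᵥ v) • vecMulVec w (star w) := by
  rw [krausMap_apply, conjTranspose_vecMulVec, vecMulVec_mul, vecMulVec_mul_vecMulVec,
    star_star, ← dotProduct_mulVec, vecMulVec_smul]

def measurePrepare {ι : Type*} [Fintype ι] (G : ι → Matrix m m ℂ) (K : ι → Matrix n n ℂ) :
    Matrix m m ℂ →ₗ[ℂ] Matrix n n ℂ :=
  ∑ z, ((traceLinearMap m ℂ ℂ).comp (mulRightLinearMap m ℂ (G z))).smulRight (K z)

theorem measurePrepare_apply {ι : Type*} [Fintype ι] (G : ι → Matrix m m ℂ)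
    (K : ι → Matrix n n ℂ) (ρ : Matrix m m ℂ) :
    measurePrepare G K ρ = ∑ z, (ρ * G z).trace • K z := by
  simp [measurePrepare]

end

variable {m n : Type} [Fintype m] [DecidableEq m] [Fintype n] [DecidableEq n]

theorem isCPMap_zero : IsCPMap (0 : Matrix m m ℂ →ₗ[ℂ] Matrix n n ℂ) :=
  fun _ _ _ => by convert PosSemidef.zero using 1; ext; rfl

theorem IsCPMap.add {Φ Ψ : Matrix m m ℂ →ₗ[ℂ] Matrix n n ℂ} (hΦ : IsCPMap Φ) (hΨ : IsCPMap Ψ) :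
    IsCPMap (Φ + Ψ) := fun k A hA => by
  convert (hΦ k A hA).add (hΨ k A hA) using 1
  rfl

theorem isCPMap_sum {ι : Type*} (s : Finset ι) {Φ : ι → Matrix m m ℂ →ₗ[ℂ] Matrix n n ℂ}
    (hΦ : ∀ i ∈ s, IsCPMap (Φ i)) : IsCPMap (∑ i ∈ s, Φ i) :=
  Finset.sum_induction _ IsCPMap (fun _ _ => IsCPMap.add) isCPMap_zero hΦ

theorem isCPMap_krausMap (V : Matrix n m ℂ) : IsCPMap (krausMap V) := by
  intro k A hA
  convert hA.mul_mul_conjTranspose_same ((1 : Matrix (Fin k) (Fin k) ℂ) ⊗ₖ V) using 1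
  ext ⟨p, i⟩ ⟨q, j⟩
  simp [krausMap_apply, mul_apply, kroneckerMap_apply, one_apply, Fintype.sum_prod_type,
    conjTranspose_apply, apply_ite (starRingEnd ℂ)]

theorem isCPMap_measurePrepare {ι : Type*} [Fintype ι] {G : ι → Matrix m m ℂ}
    {K : ι → Matrix n n ℂ} (hG : ∀ z, (G z).PosSemidef) (hK : ∀ z, (K z).PosSemidef) :
    IsCPMap (measurePrepare G K) := by
  refine isCPMap_sum _ fun z _ => ?_
  obtain ⟨k, v, hv⟩ := posSemidef_iff_eq_sum_vecMulVec.mp (hG z)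
  obtain ⟨l, w, hw⟩ := posSemidef_iff_eq_sum_vecMulVec.mp (hK z)
  have hkraus : ((traceLinearMap m ℂ ℂ).comp (mulRightLinearMap m ℂ (G z))).smulRight (K z) =
      ∑ i, ∑ j, krausMap (vecMulVec (w j) (star (v i))) := by
    ext1 ρ
    simp only [LinearMap.smulRight_apply, LinearMap.comp_apply, mulRightLinearMap_apply,
      traceLinearMap_apply, LinearMap.coe_sum, Finset.sum_apply, hv, hw, Matrix.mul_sum,
      trace_sum, trace_mul_comm ρ, trace_mul_vecMulVec_star, Finset.sum_smul, Finset.smul_sum,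
      krausMap_vecMulVec]
    exact Finset.sum_comm
  rw [hkraus]
  exact isCPMap_sum _ fun i _ => isCPMap_sum _ fun j _ => isCPMap_krausMap _

theorem IsCPMap.posSemidef_apply {Φ : Matrix m m ℂ →ₗ[ℂ] Matrix n n ℂ} (hΦ : IsCPMap Φ)
    {ρ : Matrix m m ℂ} (hρ : ρ.PosSemidef) : (Φ ρ).PosSemidef := by
  have h := (hΦ 1 (ρ.submatrix Prod.snd Prod.snd) (hρ.submatrix _)).submatrix
    fun i : n => ((0 : Fin 1), i)
  convert h using 2
  ext i j
  rfl

end CompletelyPositive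

theorem Matrix.sum_kronecker_sum {ι κ l p q r α : Type*} [NonUnitalNonAssocSemiring α]
    (s : Finset ι) (t : Finset κ) (A : ι → Matrix l p α) (B : κ → Matrix q r α) :
    (∑ i ∈ s, A i) ⊗ₖ (∑ j ∈ t, B j) = ∑ i ∈ s, ∑ j ∈ t, A i ⊗ₖ B j := by
  ext
  simp [Matrix.sum_apply, Finset.sum_mul_sum]

section Broadcast

variable {X Y d m n : Type} [Fintype X] [Fintype Y] [Fintype d] [DecidableEq d]
  [Fintype m] [DecidableEq m] [Fintype n] [DecidableEq n]
  {M : X → Matrix m m ℂ} {N : Y → Matrix n n ℂ} {G : X → Y → Matrix d d ℂ}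

theorem GenByBroadcast.trace_mul_sum_nonneg (h : GenByBroadcast M N G) {c : X → ℝ} {e : Y → ℝ}
    (hc : (∑ x, c x • M x).PosSemidef) (he : (∑ y, e y • N y).PosSemidef)
    {ρ : Matrix d d ℂ} (hρ : ρ.PosSemidef) :
    0 ≤ (ρ * ∑ x, ∑ y, (c x * e y) • G x y).trace := by
  obtain ⟨Φ, ⟨hCP, -⟩, hΦ⟩ := h
  have h := (hCP.posSemidef_apply hρ).trace_mul_nonneg (hc.kronecker he)
  simpa [Matrix.sum_kronecker_sum, Matrix.smul_kronecker, Matrix.kronecker_smul,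
    Matrix.mul_sum, Matrix.mul_smul, trace_sum, trace_smul, hΦ, mul_smul, mul_left_comm] using h

theorem trace_eq_one_of_trace_mul_eq_ite [DecidableEq X] (hM : ∑ x, M x = 1)
    (hMM : ∀ x x', (M x * M x').trace = if x = x' then 1 else 0) (x : X) : (M x).trace = 1 :=
  calc (M x).trace = (M x * ∑ x', M x').trace := by rw [hM, Matrix.mul_one]
    _ = 1 := by simp [Matrix.mul_sum, trace_sum, hMM]

theorem genByBroadcast_of_trace_mul_eq_ite [DecidableEq X] [DecidableEq Y]
    (hM : IsPOVM M) (hN : IsPOVM N)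
    (hMM : ∀ x x', (M x * M x').trace = if x = x' then 1 else 0)
    (hNN : ∀ y y', (N y * N y').trace = if y = y' then 1 else 0)
    (hG : IsPOVM fun z : X × Y => G z.1 z.2) : GenByBroadcast M N G := by
  refine ⟨measurePrepare (fun z : X × Y => G z.1 z.2) (fun z => M z.1 ⊗ₖ N z.2),
    ⟨isCPMap_measurePrepare hG.1 fun z => (hM.1 z.1).kronecker (hN.1 z.2), fun ρ => ?_⟩,
    fun ρ x y => ?_⟩
  · simp only [measurePrepare_apply, trace_sum, trace_smul, trace_kronecker,
      trace_eq_one_of_trace_mul_eq_ite hM.2 hMM, trace_eq_one_of_trace_mul_eq_ite hN.2 hNN,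
      mul_one, smul_eq_mul]
    rw [← trace_sum, ← Matrix.mul_sum, hG.2, Matrix.mul_one]
  · simp [measurePrepare_apply, Matrix.sum_mul, trace_sum, ← Matrix.mul_kronecker_mul,
      trace_kronecker, hMM, hNN, Fintype.sum_prod_type]

end Broadcast

section Qubit

theorem norm_sq_eq_fin_three (u : EuclideanSpace ℝ (Fin 3)) :
    ‖u‖ ^ 2 = u 0 ^ 2 + u 1 ^ 2 + u 2 ^ 2 := by
  simp [EuclideanSpace.real_norm_sq_eq, Fin.sum_univ_three]

theorem blochOp_eq (u : EuclideanSpace ℝ (Fin 3)) :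
    blochOp u = !![(u 2 : ℂ), u 0 - u 1 * Complex.I; u 0 + u 1 * Complex.I, -u 2] := by
  ext i j
  fin_cases i <;> fin_cases j <;> simp [blochOp, pauliX, pauliY, pauliZ, sub_eq_add_neg]

def blochOpLinear : EuclideanSpace ℝ (Fin 3) →ₗ[ℝ] Matrix (Fin 2) (Fin 2) ℂ where
  toFun := blochOp
  map_add' u v := by simp only [blochOp, PiLp.add_apply, add_smul]; abel
  map_smul' c u := by
    simp only [blochOp, PiLp.smul_apply, smul_eq_mul, RingHom.id_apply, smul_add, mul_smul]

theorem blochOp_smul (c : ℝ) (u : EuclideanSpace ℝ (Fin 3)) : blochOp (c • u) = c • blochOp u :=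
  blochOpLinear.map_smul c u

theorem blochOp_add (u v : EuclideanSpace ℝ (Fin 3)) : blochOp (u + v) = blochOp u + blochOp v :=
  blochOpLinear.map_add u v

@[simp]
theorem blochOp_zero : blochOp 0 = 0 :=
  map_zero blochOpLinear

theorem blochOp_sum {ι : Type*} (s : Finset ι) (u : ι → EuclideanSpace ℝ (Fin 3)) :
    blochOp (∑ i ∈ s, u i) = ∑ i ∈ s, blochOp (u i) :=
  map_sum blochOpLinear u s

theorem blochOp_isHermitian (u : EuclideanSpace ℝ (Fin 3)) : (blochOp u).IsHermitian := by
  ext i j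
  fin_cases i <;> fin_cases j <;> simp [blochOp_eq, conjTranspose_apply, Complex.ext_iff]

theorem trace_blochOp (u : EuclideanSpace ℝ (Fin 3)) : (blochOp u).trace = 0 := by
  simp [blochOp_eq, trace_fin_two]

theorem blochOp_mul_self (u : EuclideanSpace ℝ (Fin 3)) :
    blochOp u * blochOp u = (‖u‖ ^ 2 : ℝ) • (1 : Matrix (Fin 2) (Fin 2) ℂ) := by
  rw [norm_sq_eq_fin_three, blochOp_eq]
  ext i j
  fin_cases i <;> fin_cases j <;> apply Complex.ext <;>
    simp [mul_apply, Fin.sum_univ_two, pow_two] <;> ring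

theorem det_one_add_blochOp (u : EuclideanSpace ℝ (Fin 3)) :
    (1 + blochOp u).det = ((1 - ‖u‖ ^ 2 : ℝ) : ℂ) := by
  rw [norm_sq_eq_fin_three, blochOp_eq, det_fin_two]
  apply Complex.ext <;> simp [pow_two] <;> ring

theorem posSemidef_one_add_blochOp_of_norm_eq_one {e : EuclideanSpace ℝ (Fin 3)} (he : ‖e‖ = 1) :
    (1 + blochOp e).PosSemidef := by
  have hsq : (1 + blochOp e)ᴴ * (1 + blochOp e) = (2 : ℝ) • (1 + blochOp e) := by
    rw [(isHermitian_one.add (blochOp_isHermitian e)).eq]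
    simp only [add_mul, mul_add, Matrix.mul_one, Matrix.one_mul, blochOp_mul_self, he, one_pow,
      one_smul]
    module
  have h := (posSemidef_conjTranspose_mul_self (1 + blochOp e)).smul (by norm_num : (0 : ℝ) ≤ 1 / 2)
  rwa [hsq, smul_smul, one_div_mul_cancel two_ne_zero, one_smul] at h

theorem posSemidef_one_add_blochOp_iff {u : EuclideanSpace ℝ (Fin 3)} :
    (1 + blochOp u).PosSemidef ↔ ‖u‖ ≤ 1 := by
  constructor
  · intro h
    have hdet := h.det_nonneg
    rw [det_one_add_blochOp, Complex.zero_le_real, sub_nonneg] at hdet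
    exact (sq_le_one_iff₀ (norm_nonneg u)).mp hdet
  · intro hu
    rcases eq_or_ne u 0 with rfl | hu0
    · rw [blochOp_zero, add_zero]
      exact PosSemidef.one
    have hdecomp : 1 + blochOp u = (1 - ‖u‖) • 1 + ‖u‖ • (1 + blochOp (‖u‖⁻¹ • u)) := by
      rw [blochOp_smul, smul_add, smul_smul, mul_inv_cancel₀ (norm_ne_zero_iff.mpr hu0), one_smul]
      module
    rw [hdecomp]
    exact ((PosSemidef.one (n := Fin 2)).smul (sub_nonneg.mpr hu)).add
      ((posSemidef_one_add_blochOp_of_norm_eq_one (norm_smul_inv_norm hu0)).smul (norm_nonneg u))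

theorem sum_intUnits {M : Type*} [AddCommMonoid M] (f : ℤˣ → M) :
    ∑ σ : ℤˣ, f σ = f 1 + f (-1) := by
  simp

theorem unbiasedObs_eq (a : EuclideanSpace ℝ (Fin 3)) (σ : ℤˣ) :
    unbiasedObs a σ = (1 / 2 : ℝ) • (1 + blochOp (((σ : ℤ) : ℝ) • a)) := by
  rw [unbiasedObs, blochOp_smul]

theorem posSemidef_unbiasedObs {a : EuclideanSpace ℝ (Fin 3)} (ha : ‖a‖ ≤ 1) (σ : ℤˣ) :
    (unbiasedObs a σ).PosSemidef := by
  have hσ : ‖(((σ : ℤ) : ℝ) • a)‖ ≤ 1 := by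
    rcases Int.units_eq_one_or σ with rfl | rfl <;> simpa using ha
  rw [unbiasedObs_eq]
  exact (posSemidef_one_add_blochOp_iff.mpr hσ).smul (by norm_num)

theorem isPOVM_unbiasedObs {a : EuclideanSpace ℝ (Fin 3)} (ha : ‖a‖ ≤ 1) :
    IsPOVM (unbiasedObs a) := by
  refine ⟨posSemidef_unbiasedObs ha, ?_⟩
  simp only [sum_intUnits, unbiasedObs, Units.val_one, Units.val_neg, Int.cast_one, Int.cast_neg]
  module

theorem trace_unbiasedObs_mul {a : EuclideanSpace ℝ (Fin 3)} (ha : ‖a‖ = 1) (σ τ : ℤˣ) :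
    (unbiasedObs a σ * unbiasedObs a τ).trace = if σ = τ then 1 else 0 := by
  rcases Int.units_eq_one_or σ with rfl | rfl <;> rcases Int.units_eq_one_or τ with rfl | rfl <;>
    simp [unbiasedObs, Matrix.add_mul, Matrix.mul_add, blochOp_mul_self, ha, trace_blochOp] <;>
    norm_num

theorem sum_smul_unbiasedObs (a : EuclideanSpace ℝ (Fin 3)) (t : ℝ) :
    ∑ σ : ℤˣ, ((1 + (σ : ℤ) * t) / 2) • unbiasedObs a σ = unbiasedObs (t • a) 1 := by
  simp only [sum_intUnits, unbiasedObs, blochOp_smul, Units.val_one, Units.val_neg, Int.cast_one,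
    Int.cast_neg]
  module

theorem norm_tetraVec (g : ℝ) (σ τ : ℤˣ) : ‖tetraVec g σ τ‖ = |g| := by
  rw [← sq_eq_sq₀ (norm_nonneg _) (abs_nonneg g), sq_abs, norm_sq_eq_fin_three]
  have h3 : √3 ^ 2 = 3 := Real.sq_sqrt (by norm_num)
  rcases Int.units_eq_one_or σ with rfl | rfl <;> rcases Int.units_eq_one_or τ with rfl | rfl <;>
    · simp [tetraVec, div_pow, h3]
      ring

theorem sum_tetraVec (g : ℝ) : ∑ σ : ℤˣ, ∑ τ : ℤˣ, tetraVec g σ τ = 0 := by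
  ext i
  fin_cases i <;> simp [tetraVec]

theorem norm_sq_sum_smul_tetraVec (t u : ℝ) :
    ‖∑ σ : ℤˣ, ∑ τ : ℤˣ, ((1 + (σ : ℤ) * t) / 2 * ((1 + (τ : ℤ) * u) / 2)) • tetraVec 1 σ τ‖ ^ 2 =
      (t ^ 2 + (t * u) ^ 2 + u ^ 2) / 3 := by
  rw [norm_sq_eq_fin_three]
  simp [tetraVec]
  field_simp
  norm_num
  ring

def tetraPOVM (σ τ : ℤˣ) : Matrix (Fin 2) (Fin 2) ℂ :=
  (1 / 4 : ℝ) • (1 + blochOp (tetraVec 1 σ τ))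

theorem sum_smul_tetraPOVM (t u : ℝ) :
    ∑ σ : ℤˣ, ∑ τ : ℤˣ, ((1 + (σ : ℤ) * t) / 2 * ((1 + (τ : ℤ) * u) / 2)) • tetraPOVM σ τ =
      (1 / 4 : ℝ) • (1 + blochOp (∑ σ : ℤˣ, ∑ τ : ℤˣ,
        ((1 + (σ : ℤ) * t) / 2 * ((1 + (τ : ℤ) * u) / 2)) • tetraVec 1 σ τ)) := by
  simp only [tetraPOVM, blochOp_add, blochOp_smul, sum_intUnits, Units.val_one, Units.val_neg,
    Int.cast_one, Int.cast_neg]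
  module

theorem isPOVM_tetraPOVM : IsPOVM fun z : ℤˣ × ℤˣ => tetraPOVM z.1 z.2 := by
  refine ⟨fun z => (posSemidef_one_add_blochOp_iff.mpr (by simp [norm_tetraVec])).smul
    (by norm_num), ?_⟩
  rw [Fintype.sum_prod_type]
  simp only [tetraPOVM, smul_add, Finset.sum_add_distrib, ← Finset.smul_sum, ← blochOp_sum]
  rw [sum_tetraVec, blochOp_zero]
  simp only [sum_intUnits]
  module

end Qubit

theorem genByBroadcast_tetraPOVM {a b : EuclideanSpace ℝ (Fin 3)} (ha : ‖a‖ = 1) (hb : ‖b‖ = 1) :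
    GenByBroadcast (unbiasedObs a) (unbiasedObs b) tetraPOVM :=
  genByBroadcast_of_trace_mul_eq_ite (isPOVM_unbiasedObs ha.le) (isPOVM_unbiasedObs hb.le)
    (trace_unbiasedObs_mul ha) (trace_unbiasedObs_mul hb) isPOVM_tetraPOVM

theorem GenByBroadcast.tetraPOVM_bound {a b : EuclideanSpace ℝ (Fin 3)} (ha : a ≠ 0) (hb : b ≠ 0)
    (h : GenByBroadcast (unbiasedObs a) (unbiasedObs b) tetraPOVM) :
    ‖a‖⁻¹ ^ 2 + (‖a‖⁻¹ * ‖b‖⁻¹) ^ 2 + ‖b‖⁻¹ ^ 2 ≤ 3 := by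
  set v := ∑ σ : ℤˣ, ∑ τ : ℤˣ,
    ((1 + (σ : ℤ) * ‖a‖⁻¹) / 2 * ((1 + (τ : ℤ) * ‖b‖⁻¹) / 2)) • tetraVec 1 σ τ with hv
  have hP : (∑ σ : ℤˣ, ((1 + (σ : ℤ) * ‖a‖⁻¹) / 2) • unbiasedObs a σ).PosSemidef := by
    rw [sum_smul_unbiasedObs]
    exact posSemidef_unbiasedObs (norm_smul_inv_norm ha).le 1
  have hQ : (∑ τ : ℤˣ, ((1 + (τ : ℤ) * ‖b‖⁻¹) / 2) • unbiasedObs b τ).PosSemidef := by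
    rw [sum_smul_unbiasedObs]
    exact posSemidef_unbiasedObs (norm_smul_inv_norm hb).le 1
  have hH : ((1 / 4 : ℝ) • (1 + blochOp v)).PosSemidef := by
    refine posSemidef_of_trace_mul_nonneg ?_ fun ρ hρ => ?_
    · exact (isHermitian_one.add (blochOp_isHermitian v)).smul (IsSelfAdjoint.all _)
    · rw [hv, ← sum_smul_tetraPOVM]
      exact h.trace_mul_sum_nonneg hP hQ hρ
  have hv1 : ‖v‖ ≤ 1 := posSemidef_one_add_blochOp_iff.mp (by
    simpa [smul_smul] using hH.smul (by norm_num : (0 : ℝ) ≤ 4))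
  have := norm_sq_sum_smul_tetraVec ‖a‖⁻¹ ‖b‖⁻¹ ▸ pow_le_one₀ (norm_nonneg v) hv1
  linarith

theorem eq_one_of_one_le_of_sq_add_sq_add_sq_le {t u : ℝ} (ht : 1 ≤ t) (hu : 1 ≤ u)
    (h : t ^ 2 + (t * u) ^ 2 + u ^ 2 ≤ 3) : t = 1 ∧ u = 1 := by
  have htu : 1 ≤ t * u := one_le_mul_of_one_le_of_one_le ht hu
  constructor <;> nlinarith

theorem GenByBroadcast.norm_eq_one_of_tetraPOVM {a b : EuclideanSpace ℝ (Fin 3)}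
    (ha : 0 < ‖a‖) (ha' : ‖a‖ ≤ 1) (hb : 0 < ‖b‖) (hb' : ‖b‖ ≤ 1)
    (h : GenByBroadcast (unbiasedObs a) (unbiasedObs b) tetraPOVM) :
    ‖a‖ = 1 ∧ ‖b‖ = 1 := by
  rw [← inv_eq_one (a := ‖a‖), ← inv_eq_one (a := ‖b‖)]
  exact eq_one_of_one_le_of_sq_add_sq_add_sq_le ((one_le_inv₀ ha).mpr ha')
    ((one_le_inv₀ hb).mpr hb') (h.tetraPOVM_bound (norm_pos_iff.mp ha) (norm_pos_iff.mp hb))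

/-- the rank-1 informationally complete POVM `G^1` can be generated
through broadcasting from unbiased qubit observables with sharpnesses `r` and `s` iff
`r = 1` and `s = 1`, i.e. iff both observables are sharp. -/
theorem statement5 (r s : ℝ) (hr : r ∈ Set.Ioc (0 : ℝ) 1) (hs : s ∈ Set.Ioc (0 : ℝ) 1)
    (a b : EuclideanSpace ℝ (Fin 3)) (ha : ‖a‖ = r) (hb : ‖b‖ = s) :
    GenByBroadcast (unbiasedObs a) (unbiasedObs b)
      (fun σ τ => (1 / 4 : ℝ) • ((1 : Matrix (Fin 2) (Fin 2) ℂ) + blochOp (tetraVec 1 σ τ))) ↔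
    (r = 1 ∧ s = 1) := by
  subst ha hb
  exact ⟨fun h => h.norm_eq_one_of_tetraPOVM hr.1 hr.2 hs.1 hs.2,
    fun ⟨ha, hb⟩ => genByBroadcast_tetraPOVM ha hb⟩
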